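/- With K(x,y) = ψ(y−Ax)+ψ(x−Ay), one has limsup_{p→∞} [λ_{1,p}(ℝ^d)]^{1/p} ≤ λ_{1,∞}(ℝ^d). -/

import Mathlib

open MeasureTheory Filter

/-!
In fact `λ_{1,p}(ℝ^d) ^ (1/p) → 0`, while `λ_{1,∞}(ℝ^d) ≥ 0`. Since `ψ` is integrable,
`∫ K(x, y) dy` is the constant `m = (1 + |det A|⁻¹) ∫ ψ`; since `ψ` vanishes off the unit ball,
`K(x, y) > 0` puts `y` within distance `1` of `A x` or `x` within distance `1` of `A y`, so
`1 + |x|` and `1 + |y|` agree up to a fixed factor `C`. The test function `u(x) = (1 + |x|)^(-β)`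
lies in `L^p` once `β p > d` and satisfies `|u x - u y| ≤ (C^β - 1) u x` wherever `K(x, y) > 0`,
so `λ_{1,p} ≤ m (C^β - 1)^p`. Let `p → ∞`, then `β → 0`.
-/

/-- The first eigenvalue of the nonlocal `p`-Laplacian with kernel `K` on the whole space. -/
noncomputable def lambdaOne (d : ℕ) (p : ℝ)
    (K : EuclideanSpace ℝ (Fin d) → EuclideanSpace ℝ (Fin d) → ℝ) : ℝ :=
  sInf { r : ℝ |
    ∃ u : EuclideanSpace ℝ (Fin d) → ℝ,
      MemLp u (ENNReal.ofReal p) volume ∧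
      ¬ u =ᵐ[volume] (0 : EuclideanSpace ℝ (Fin d) → ℝ) ∧
      r = (∫ x, ∫ y, K x y * |u x - u y| ^ p) / (∫ x, |u x| ^ p) }

/-- The `p = ∞` first eigenvalue of the nonlocal operator with kernel `K`:
the infimum, over nonzero compactly supported bounded functions `u`, of the quotient of the
supremum of `|u x - u y|` over pairs of points of the support of `u` where the kernel is
positive, by the supremum of `|u|` on the support of `u`. -/
noncomputable def lambdaOneInfty (d : ℕ)
    (K : EuclideanSpace ℝ (Fin d) → EuclideanSpace ℝ (Fin d) → ℝ) : ℝ :=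
  sInf { r : ℝ |
    ∃ u : EuclideanSpace ℝ (Fin d) → ℝ,
      MemLp u ⊤ volume ∧ HasCompactSupport u ∧ u ≠ 0 ∧
      r = sSup { v : ℝ | ∃ x y : EuclideanSpace ℝ (Fin d),
              x ∈ Function.support u ∧ y ∈ Function.support u ∧ 0 < K x y ∧
              v = |u x - u y| } /
          sSup { v : ℝ | ∃ x ∈ Function.support u, v = |u x| } }

lemma abs_sub_le_sub_one_mul {a b D : ℝ} (hD : 1 ≤ D) (hab : a ≤ D * b)
    (hba : b ≤ D * a) : |a - b| ≤ (D - 1) * a := by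
  rw [abs_sub_le_iff]
  constructor
  · nlinarith
  · linarith

lemma abs_rpow_neg_sub_rpow_neg_le {s t C β : ℝ} (hs : 0 < s) (ht : 0 < t) (hC : 1 ≤ C)
    (hβ : 0 ≤ β) (hst : s ≤ C * t) (hts : t ≤ C * s) :
    |s ^ (-β) - t ^ (-β)| ≤ (C ^ β - 1) * s ^ (-β) := by
  have inv_le {a b : ℝ} (ha : 0 < a) (hb : 0 < b) (h : b ≤ C * a) : a⁻¹ ^ β ≤ C ^ β * b⁻¹ ^ β := by
    rw [← Real.mul_rpow (by linarith) (by positivity)]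
    refine Real.rpow_le_rpow (by positivity) ?_ hβ
    rw [← div_eq_mul_inv, le_div_iff₀ hb, inv_mul_le_iff₀ ha]
    linarith
  simp only [Real.rpow_neg hs.le, Real.rpow_neg ht.le, ← Real.inv_rpow hs.le, ← Real.inv_rpow ht.le]
  exact abs_sub_le_sub_one_mul (Real.one_le_rpow hC hβ) (inv_le hs ht hts)
    (inv_le ht hs hst)

lemma integral_integral_le_mul_integral {X Y : Type*} [MeasurableSpace X] [MeasurableSpace Y]
    {μ : Measure X} {ν : Measure Y} {K F : X → Y → ℝ} {g : X → ℝ} {m : ℝ}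
    (hKint : ∀ x, Integrable (K x) ν) (hKm : ∀ x, ∫ y, K x y ∂ν ≤ m)
    (hg : Integrable g μ) (hg0 : ∀ x, 0 ≤ g x) (hF0 : ∀ x y, 0 ≤ F x y)
    (hF : ∀ x y, F x y ≤ K x y * g x) :
    ∫ x, ∫ y, F x y ∂ν ∂μ ≤ m * ∫ x, g x ∂μ := by
  have inner (x : X) : ∫ y, F x y ∂ν ≤ m * g x :=
    calc ∫ y, F x y ∂ν ≤ ∫ y, K x y * g x ∂ν :=
          integral_mono_of_nonneg (.of_forall (hF0 x)) ((hKint x).mul_const _) (.of_forall (hF x))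
      _ = (∫ y, K x y ∂ν) * g x := integral_mul_const _ _
      _ ≤ m * g x := mul_le_mul_of_nonneg_right (hKm x) (hg0 x)
  calc ∫ x, ∫ y, F x y ∂ν ∂μ ≤ ∫ x, m * g x ∂μ :=
        integral_mono_of_nonneg (.of_forall fun x => integral_nonneg (hF0 x)) (hg.const_mul m)
          (.of_forall inner)
    _ = m * ∫ x, g x ∂μ := integral_const_mul _ _

section LambdaOne

variable {d : ℕ} {K : EuclideanSpace ℝ (Fin d) → EuclideanSpace ℝ (Fin d) → ℝ}

lemma lambdaOneInfty_nonneg : 0 ≤ lambdaOneInfty d K := by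
  refine Real.sInf_nonneg ?_
  rintro r ⟨u, -, -, -, rfl⟩
  refine div_nonneg (Real.sSup_nonneg ?_) (Real.sSup_nonneg ?_)
  · rintro v ⟨x, y, -, -, -, rfl⟩
    exact abs_nonneg _
  · rintro v ⟨_, -, rfl⟩
    exact abs_nonneg _

lemma rayleighQuotient_nonneg (hK : ∀ x y, 0 ≤ K x y) (p : ℝ)
    (u : EuclideanSpace ℝ (Fin d) → ℝ) :
    0 ≤ (∫ x, ∫ y, K x y * |u x - u y| ^ p) / (∫ x, |u x| ^ p) :=
  div_nonneg (integral_nonneg fun x => integral_nonneg fun y =>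
      mul_nonneg (hK x y) (Real.rpow_nonneg (abs_nonneg _) _))
    (integral_nonneg fun _ => Real.rpow_nonneg (abs_nonneg _) _)

lemma lambdaOne_nonneg (hK : ∀ x y, 0 ≤ K x y) (p : ℝ) : 0 ≤ lambdaOne d p K := by
  refine Real.sInf_nonneg ?_
  rintro r ⟨u, -, -, rfl⟩
  exact rayleighQuotient_nonneg hK p u

lemma lambdaOne_le_rayleighQuotient (hK : ∀ x y, 0 ≤ K x y) {p : ℝ}
    {u : EuclideanSpace ℝ (Fin d) → ℝ} (hu : MemLp u (ENNReal.ofReal p) volume)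
    (hu0 : ¬ u =ᵐ[volume] 0) :
    lambdaOne d p K ≤ (∫ x, ∫ y, K x y * |u x - u y| ^ p) / (∫ x, |u x| ^ p) := by
  refine csInf_le ⟨0, ?_⟩ ⟨u, hu, hu0, rfl⟩
  rintro r ⟨v, -, -, rfl⟩
  exact rayleighQuotient_nonneg hK p v

theorem lambdaOne_le_of_comparable {C β p m : ℝ} (hK : ∀ x y, 0 ≤ K x y)
    (hKint : ∀ x, Integrable (K x)) (hKm : ∀ x, ∫ y, K x y ≤ m) (hC : 1 ≤ C)
    (hKC : ∀ x y, K x y ≠ 0 → 1 + ‖x‖ ≤ C * (1 + ‖y‖) ∧ 1 + ‖y‖ ≤ C * (1 + ‖x‖))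
    (hβ : 0 < β) (hdp : (d : ℝ) < β * p) :
    lambdaOne d p K ≤ m * (C ^ β - 1) ^ p := by
  have hp : 0 < p := pos_of_mul_pos_right ((Nat.cast_nonneg d).trans_lt hdp) hβ.le
  set u : EuclideanSpace ℝ (Fin d) → ℝ := fun x => (1 + ‖x‖) ^ (-β)
  have one_add_pos (x : EuclideanSpace ℝ (Fin d)) : 0 < 1 + ‖x‖ := by positivity
  have u_pos (x) : 0 < u x := Real.rpow_pos_of_pos (one_add_pos x) _
  have u_pow (x) : |u x| ^ p = (1 + ‖x‖) ^ (-(β * p)) := by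
    rw [abs_of_pos (u_pos x), ← Real.rpow_mul (one_add_pos x).le, neg_mul]
  have u_pow_int : Integrable (fun x => |u x| ^ p) := by
    simp_rw [u_pow]
    exact integrable_one_add_norm (by rwa [finrank_euclideanSpace_fin])
  have hu : MemLp u (ENNReal.ofReal p) volume := by
    have hcont : Continuous u :=
      (continuous_const.add continuous_norm).rpow_const fun x => .inl (one_add_pos x).ne'
    refine (integrable_norm_rpow_iff hcont.aestronglyMeasurable (by simpa using hp)
      ENNReal.ofReal_ne_top).1 ?_
    simpa only [Real.norm_eq_abs, ENNReal.toReal_ofReal hp.le] using u_pow_int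
  have hu0 : ¬ u =ᵐ[volume] 0 := fun h => by
    obtain ⟨x, hx⟩ := h.exists
    exact (u_pos x).ne' hx
  have hden : 0 < ∫ x, |u x| ^ p := by
    refine (integral_pos_iff_support_of_nonneg (fun x => by positivity) u_pow_int).2 ?_
    rw [Function.support_eq_univ fun x => (Real.rpow_pos_of_pos (abs_pos.2 (u_pos x).ne') p).ne']
    exact Measure.measure_univ_pos.2 (NeZero.ne _)
  have hc : 0 ≤ C ^ β - 1 := sub_nonneg.2 (Real.one_le_rpow hC hβ.le)
  have hosc (x y) : K x y * |u x - u y| ^ p ≤ K x y * ((C ^ β - 1) ^ p * |u x| ^ p) := by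
    rcases eq_or_ne (K x y) 0 with hxy | hxy
    · simp [hxy]
    obtain ⟨hxy, hyx⟩ := hKC x y hxy
    refine mul_le_mul_of_nonneg_left ?_ (hK x y)
    rw [← Real.mul_rpow hc (abs_nonneg _), abs_of_pos (u_pos x)]
    exact Real.rpow_le_rpow (abs_nonneg _) (abs_rpow_neg_sub_rpow_neg_le (one_add_pos x)
      (one_add_pos y) hC hβ.le hxy hyx) hp.le
  refine (lambdaOne_le_rayleighQuotient hK hu hu0).trans ?_
  rw [div_le_iff₀ hden, mul_assoc, ← integral_const_mul]
  exact integral_integral_le_mul_integral hKint hKm (u_pow_int.const_mul _)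
    (fun _ => by positivity) (fun x y => mul_nonneg (hK x y) (by positivity)) hosc

theorem tendsto_lambdaOne_rpow_one_div_atTop_zero {C m : ℝ} (hK : ∀ x y, 0 ≤ K x y)
    (hKint : ∀ x, Integrable (K x)) (hKm : ∀ x, ∫ y, K x y ≤ m) (hC : 1 ≤ C)
    (hKC : ∀ x y, K x y ≠ 0 → 1 + ‖x‖ ≤ C * (1 + ‖y‖) ∧ 1 + ‖y‖ ≤ C * (1 + ‖x‖)) :
    Tendsto (fun p : ℝ => lambdaOne d p K ^ (1 / p)) atTop (nhds 0) := by
  refine tendsto_order.2 ⟨fun a ha => .of_forall fun p =>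
    ha.trans_le (Real.rpow_nonneg (lambdaOne_nonneg hK p) _), fun ε hε => ?_⟩
  obtain ⟨β, hCβ, hβ⟩ : ∃ β : ℝ, C ^ β < 1 + ε / 2 ∧ 0 < β := by
    have hcont : Tendsto (fun β : ℝ => C ^ β) (nhdsWithin 0 (Set.Ioi 0)) (nhds 1) := by
      simpa using (Real.continuousAt_const_rpow (by linarith : C ≠ 0) (b := 0)).tendsto.mono_left
        nhdsWithin_le_nhds
    exact ((hcont.eventually (gt_mem_nhds (by linarith))).and self_mem_nhdsWithin).exists
  have hdp : ∀ᶠ p : ℝ in atTop, (d : ℝ) < β * p :=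
    (tendsto_id.const_mul_atTop hβ).eventually_gt_atTop _
  have hm : ∀ᶠ p : ℝ in atTop, m ≤ 2 ^ p :=
    (tendsto_rpow_atTop_of_base_gt_one 2 one_lt_two).eventually_ge_atTop m
  filter_upwards [hdp, hm] with p hdp hm
  have hp : 0 < p := pos_of_mul_pos_right ((Nat.cast_nonneg d).trans_lt hdp) hβ.le
  have hc : 0 ≤ C ^ β - 1 := sub_nonneg.2 (Real.one_le_rpow hC hβ.le)
  have hlam : lambdaOne d p K ≤ (2 * (C ^ β - 1)) ^ p :=
    calc lambdaOne d p K ≤ m * (C ^ β - 1) ^ p :=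
          lambdaOne_le_of_comparable hK hKint hKm hC hKC hβ hdp
      _ ≤ 2 ^ p * (C ^ β - 1) ^ p := by gcongr
      _ = (2 * (C ^ β - 1)) ^ p := (Real.mul_rpow zero_le_two hc).symm
  calc lambdaOne d p K ^ (1 / p) ≤ ((2 * (C ^ β - 1)) ^ p) ^ (1 / p) := by
        gcongr
        exact lambdaOne_nonneg hK p
    _ = 2 * (C ^ β - 1) := by rw [one_div, Real.rpow_rpow_inv (by positivity) hp.ne']
    _ < ε := by linarith

end LambdaOne

section Kernel

variable {E F : Type*} [NormedAddCommGroup E] [NormedSpace ℝ E] [NormedAddCommGroup F]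

def symmetrizedKernel (ψ : E → ℝ) (L : E → E) (x y : E) : ℝ := ψ (y - L x) + ψ (x - L y)

lemma one_add_norm_le_of_norm_sub_le (e : E ≃L[ℝ] E) {x y : E} (h : ‖y - e x‖ ≤ 1) :
    1 + ‖y‖ ≤ (2 + ‖(e : E →L[ℝ] E)‖ + ‖(e.symm : E →L[ℝ] E)‖) * (1 + ‖x‖) ∧
      1 + ‖x‖ ≤ (2 + ‖(e : E →L[ℝ] E)‖ + ‖(e.symm : E →L[ℝ] E)‖) * (1 + ‖y‖) := by
  have hex : ‖e x‖ ≤ ‖(e : E →L[ℝ] E)‖ * ‖x‖ := (e : E →L[ℝ] E).le_opNorm x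
  have hx : ‖x‖ ≤ ‖(e.symm : E →L[ℝ] E)‖ * ‖e x‖ := by
    simpa using (e.symm : E →L[ℝ] E).le_opNorm (e x)
  have hy : ‖y‖ ≤ 1 + ‖e x‖ := by
    linarith [norm_le_norm_add_norm_sub' y (e x)]
  have hy' : ‖e x‖ ≤ 1 + ‖y‖ := by
    have := norm_le_norm_add_norm_sub' (e x) y
    rw [norm_sub_rev] at this
    linarith
  constructor <;> nlinarith [norm_nonneg x, norm_nonneg y, norm_nonneg (e : E →L[ℝ] E),
    norm_nonneg (e.symm : E →L[ℝ] E)]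

lemma exists_comparable_of_symmetrizedKernel_ne_zero [FiniteDimensional ℝ E] {ψ : E → ℝ}
    (hψ : Function.support ψ ⊆ Metric.closedBall 0 1) {L : E →ₗ[ℝ] E}
    (hL : LinearMap.det L ≠ 0) :
    ∃ C : ℝ, 1 ≤ C ∧ ∀ x y, symmetrizedKernel ψ L x y ≠ 0 →
      1 + ‖x‖ ≤ C * (1 + ‖y‖) ∧ 1 + ‖y‖ ≤ C * (1 + ‖x‖) := by
  set e := (L.equivOfDetNeZero hL).toContinuousLinearEquiv
  have hnear {x y : E} (h : ψ (y - e x) ≠ 0) : ‖y - e x‖ ≤ 1 := mem_closedBall_zero_iff.1 (hψ h)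
  refine ⟨2 + ‖(e : E →L[ℝ] E)‖ + ‖(e.symm : E →L[ℝ] E)‖,
    by linarith [norm_nonneg (e : E →L[ℝ] E), norm_nonneg (e.symm : E →L[ℝ] E)], fun x y hxy => ?_⟩
  rcases ne_or_eq (ψ (y - e x)) 0 with h | h
  · exact (one_add_norm_le_of_norm_sub_le e (hnear h)).symm
  · have hxy' : ψ (y - e x) + ψ (x - e y) ≠ 0 := hxy
    rw [h, zero_add] at hxy'
    exact one_add_norm_le_of_norm_sub_le e (hnear hxy')

variable [MeasurableSpace E] [BorelSpace E] [FiniteDimensional ℝ E] (μ : Measure E)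
  [μ.IsAddHaarMeasure] {L : E →ₗ[ℝ] E}

lemma integral_comp_linearMap [NormedSpace ℝ F] (f : E → F) (hL : LinearMap.det L ≠ 0) :
    ∫ y, f (L y) ∂μ = |(LinearMap.det L)⁻¹| • ∫ z, f z ∂μ := by
  set e := (L.equivOfDetNeZero hL).toContinuousLinearEquiv.toHomeomorph
  have hmap : Measure.map e μ = ENNReal.ofReal |(LinearMap.det L)⁻¹| • μ :=
    Measure.map_linearMap_addHaar_eq_smul_addHaar μ hL
  change ∫ y, f (e y) ∂μ = _
  rw [← e.measurableEmbedding.integral_map, hmap, integral_smul_measure,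
    ENNReal.toReal_ofReal (abs_nonneg _)]

lemma integrable_comp_linearMap {f : E → F} (hf : Integrable f μ) (hL : LinearMap.det L ≠ 0) :
    Integrable (fun y => f (L y)) μ := by
  set e := (L.equivOfDetNeZero hL).toContinuousLinearEquiv.toHomeomorph
  have hmap : Measure.map e μ = ENNReal.ofReal |(LinearMap.det L)⁻¹| • μ :=
    Measure.map_linearMap_addHaar_eq_smul_addHaar μ hL
  change Integrable (f ∘ e) μ
  rw [← e.measurableEmbedding.integrable_map_iff, hmap]
  exact hf.smul_measure ENNReal.ofReal_ne_top

variable {μ} {ψ : E → ℝ}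

lemma integrable_symmetrizedKernel (hψ : Integrable ψ μ) (hL : LinearMap.det L ≠ 0) (x : E) :
    Integrable (symmetrizedKernel ψ L x) μ :=
  (hψ.comp_sub_right (L x)).add (integrable_comp_linearMap μ (hψ.comp_sub_left x) hL)

lemma integral_symmetrizedKernel (hψ : Integrable ψ μ) (hL : LinearMap.det L ≠ 0) (x : E) :
    ∫ y, symmetrizedKernel ψ L x y ∂μ = (1 + |(LinearMap.det L)⁻¹|) * ∫ z, ψ z ∂μ := by
  rw [show symmetrizedKernel ψ L x = fun y => ψ (y - L x) + ψ (x - L y) from rfl,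
    integral_add (hψ.comp_sub_right (L x)) (integrable_comp_linearMap μ (hψ.comp_sub_left x) hL),
    integral_sub_right_eq_self, integral_comp_linearMap μ (fun z => ψ (x - z)) hL,
    integral_sub_left_eq_self, smul_eq_mul, add_mul, one_mul]

end Kernel

theorem limsup_le_lambdaOneInfty_general (d : ℕ)
    (ψ : EuclideanSpace ℝ (Fin d) → ℝ)
    (hψmeas : Measurable ψ) (hψnn : ∀ z, 0 ≤ ψ z)
    (hψbdd : ∃ M : ℝ, ∀ z, ψ z ≤ M)
    (hψsupp : ∀ z, ψ z ≠ 0 → z ∈ Metric.closedBall (0 : EuclideanSpace ℝ (Fin d)) 1)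
    (A : Matrix (Fin d) (Fin d) ℝ) (hA : IsUnit A.det)
    (K : EuclideanSpace ℝ (Fin d) → EuclideanSpace ℝ (Fin d) → ℝ)
    (hK : K = fun x y =>
      ψ (y - Matrix.toEuclideanLin A x) + ψ (x - Matrix.toEuclideanLin A y)) :
    Filter.limsup (fun p : ℝ => (lambdaOne d p K) ^ (1 / p)) atTop ≤ lambdaOneInfty d K := by
  obtain ⟨M, hM⟩ := hψbdd
  set L := Matrix.toEuclideanLin A
  have hL : LinearMap.det L ≠ 0 := by
    rw [LinearMap.det_toLpLin]
    exact hA.ne_zero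
  have hψint : Integrable ψ := (integrableOn_iff_integrable_of_support_subset hψsupp).1 <|
    Measure.integrableOn_of_bounded measure_closedBall_lt_top.ne hψmeas.aestronglyMeasurable
      (M := M) (.of_forall fun z => by rw [Real.norm_of_nonneg (hψnn z)]; exact hM z)
  obtain ⟨C, hC, hKC⟩ := exists_comparable_of_symmetrizedKernel_ne_zero hψsupp hL
  obtain rfl : K = symmetrizedKernel ψ L := hK
  have hlim := tendsto_lambdaOne_rpow_one_div_atTop_zero
    (fun x y => add_nonneg (hψnn _) (hψnn _)) (integrable_symmetrizedKernel hψint hL)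
    (fun x => (integral_symmetrizedKernel hψint hL x).le) hC hKC
  exact hlim.limsup_eq.trans_le lambdaOneInfty_nonneg

theorem limsup_le_lambdaOneInfty (d : ℕ) (hd : 1 ≤ d)
    (ψ : EuclideanSpace ℝ (Fin d) → ℝ)
    (hψmeas : Measurable ψ) (hψnn : ∀ z, 0 ≤ ψ z)
    (hψbdd : ∃ M : ℝ, ∀ z, ψ z ≤ M)
    (hψsupp : ∀ z, ψ z ≠ 0 → z ∈ Metric.closedBall (0 : EuclideanSpace ℝ (Fin d)) 1)
    (A : Matrix (Fin d) (Fin d) ℝ) (hA : IsUnit A.det)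
    (K : EuclideanSpace ℝ (Fin d) → EuclideanSpace ℝ (Fin d) → ℝ)
    (hK : K = fun x y =>
      ψ (y - Matrix.toEuclideanLin A x) + ψ (x - Matrix.toEuclideanLin A y)) :
    Filter.limsup (fun p : ℝ => (lambdaOne d p K) ^ (1 / p)) atTop ≤ lambdaOneInfty d K :=
  limsup_le_lambdaOneInfty_general d ψ hψmeas hψnn hψbdd hψsupp A hA K hK
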